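/- arXiv:0904.0408 — 2 statements merged into one kernel-verified Lean document; each statement's English description precedes it below -/
import Mathlib

section
/- If f : ℤ^n → ℂ is of Vassiliev type ≤ p and g : ℤ^n → ℂ is of Vassiliev type ≤ q, then the pointwise product f·g is of Vassiliev type ≤ p + q. -/
open Finset

/-- Forward finite difference in direction `i` for functions on the crossing-change lattice. -/
def fdiff {ι : Type*} [DecidableEq ι] (i : ι) (f : (ι → ℤ) → ℂ) : (ι → ℤ) → ℂ :=
  fun x => f (x + Pi.single i 1) - f x

/-- Iterated finite difference along a list of indices. -/
def fdiffList {ι : Type*} [DecidableEq ι] (l : List ι) (f : (ι → ℤ) → ℂ) : (ι → ℤ) → ℂ :=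
  l.foldr fdiff f

/-- `f` is of Vassiliev type ≤ m if every (m+1)-fold iterated difference vanishes. -/
def VasType {ι : Type*} [DecidableEq ι] (m : ℕ) (f : (ι → ℤ) → ℂ) : Prop :=
  ∀ l : List ι, l.length = m + 1 → fdiffList l f = 0

namespace VasAux

variable {ι : Type*} [DecidableEq ι]

/-- Translation of a function by `v`. -/
def shift (v : ι → ℤ) (f : (ι → ℤ) → ℂ) : (ι → ℤ) → ℂ := fun x => f (x + v)

lemma fdiffList_singleton (i : ι) (f : (ι → ℤ) → ℂ) : fdiffList [i] f = fdiff i f := rfl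

lemma fdiffList_append (l₁ l₂ : List ι) (f : (ι → ℤ) → ℂ) :
    fdiffList (l₁ ++ l₂) f = fdiffList l₁ (fdiffList l₂ f) := by
  simp [fdiffList, List.foldr_append]

lemma fdiff_zero (i : ι) : fdiff i (0 : (ι → ℤ) → ℂ) = 0 := by
  funext x; simp [fdiff]

lemma fdiffList_zero (l : List ι) : fdiffList l (0 : (ι → ℤ) → ℂ) = 0 := by
  induction l with
  | nil => rfl
  | cons i l ih =>
    show fdiff i (fdiffList l 0) = 0
    rw [ih, fdiff_zero]

lemma fdiff_add (i : ι) (f g : (ι → ℤ) → ℂ) :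
    fdiff i (f + g) = fdiff i f + fdiff i g := by
  funext x; simp [fdiff]; ring

lemma fdiffList_add (l : List ι) (f g : (ι → ℤ) → ℂ) :
    fdiffList l (f + g) = fdiffList l f + fdiffList l g := by
  induction l with
  | nil => rfl
  | cons i l ih =>
    show fdiff i (fdiffList l (f + g)) = _
    rw [ih, fdiff_add]; rfl

lemma fdiff_shift (i : ι) (v : ι → ℤ) (f : (ι → ℤ) → ℂ) :
    fdiff i (shift v f) = shift v (fdiff i f) := by
  funext x; simp [fdiff, shift, add_right_comm]

lemma fdiffList_shift (l : List ι) (v : ι → ℤ) (f : (ι → ℤ) → ℂ) :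
    fdiffList l (shift v f) = shift v (fdiffList l f) := by
  induction l with
  | nil => rfl
  | cons i l ih =>
    show fdiff i (fdiffList l (shift v f)) = _
    rw [ih, fdiff_shift]; rfl

lemma shift_zero (v : ι → ℤ) : shift v (0 : (ι → ℤ) → ℂ) = 0 := by
  funext x; simp [shift]

lemma fdiff_mul (i : ι) (f g : (ι → ℤ) → ℂ) :
    fdiff i (f * g) = fdiff i f * shift (Pi.single i 1) g + f * fdiff i g := by
  funext x; simp [fdiff, shift]; ring

lemma vas_fdiff {p : ℕ} {f : (ι → ℤ) → ℂ} (hf : VasType (p + 1) f) (i : ι) :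
    VasType p (fdiff i f) := by
  intro t ht
  have := hf (t ++ [i]) (by simp [ht])
  rwa [fdiffList_append, fdiffList_singleton] at this

lemma vas_shift {q : ℕ} {g : (ι → ℤ) → ℂ} (hg : VasType q g) (v : ι → ℤ) :
    VasType q (shift v g) := by
  intro t ht
  rw [fdiffList_shift, hg t ht, shift_zero]

lemma key (N : ℕ) : ∀ p q : ℕ, p + q = N → ∀ f g : (ι → ℤ) → ℂ, VasType p f → VasType q g →
    ∀ l : List ι, l.length = p + q + 1 → fdiffList l (f * g) = 0 := by
  induction N using Nat.strong_induction_on with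
  | _ N ih =>
    intro p q hpq f g hf hg l hl
    obtain rfl | ⟨l', i, rfl⟩ := l.eq_nil_or_concat
    · simp at hl
    · have hl' : l'.length = p + q := by simpa using hl
      rw [List.concat_eq_append, fdiffList_append, fdiffList_singleton, fdiff_mul, fdiffList_add]
      have h1 : fdiffList l' (fdiff i f * shift (Pi.single i 1) g) = 0 := by
        rcases p with _ | p'
        · have h0 : fdiff i f = 0 := hf [i] rfl
          rw [h0, zero_mul, fdiffList_zero]
        · exact ih (p' + q) (by omega) p' q rfl _ _ (vas_fdiff hf i)
            (vas_shift hg _) l' (by omega)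
      have h2 : fdiffList l' (f * fdiff i g) = 0 := by
        rcases q with _ | q'
        · have h0 : fdiff i g = 0 := hg [i] rfl
          rw [h0, mul_zero, fdiffList_zero]
        · exact ih (p + q') (by omega) p q' rfl _ _ hf (vas_fdiff hg i) l' (by omega)
      rw [h1, h2, add_zero]

end VasAux

theorem vassiliev_type_mul {n : ℕ} (p q : ℕ) (f g : (Fin n → ℤ) → ℂ)
    (hf : VasType p f) (hg : VasType q g) :
    VasType (p + q) (f * g) := by
  intro l hl
  exact VasAux.key (p + q) p q rfl f g hf hg l hl
end

section
/- Let Q̂ : ℕ → (ℤ^n → ℂ) with each Q̂_j of Vassiliev type ≤ j, let d : ℕ → ℂ, and define Q'_m = Σ_{j=0}^{m} d_j · Q̂_{m−j}. Then for any m indices i_1, …, i_m ∈ Fin n and any x ∈ ℤ^n, (Δ_{i_1} ⋯ Δ_{i_m} Q'_m)(x) = d_0 · (Δ_{i_1} ⋯ Δ_{i_m} Q̂_m)(x). -/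
open Finset

lemma fdiffList_sum {ι α : Type*} [DecidableEq ι] (s : Finset α)
    (F : α → (ι → ℤ) → ℂ) (l : List ι) :
    fdiffList l (fun y => ∑ a ∈ s, F a y) = fun x => ∑ a ∈ s, fdiffList l (F a) x := by
  induction l with
  | nil => rfl
  | cons i t ih =>
      funext x
      simp only [fdiffList, List.foldr_cons] at ih ⊢
      rw [ih, fdiff]
      simp [Finset.sum_sub_distrib, fdiff]

lemma fdiffList_const_mul {ι : Type*} [DecidableEq ι] (c : ℂ) (f : (ι → ℤ) → ℂ)
    (l : List ι) : fdiffList l (fun y => c * f y) = fun x => c * fdiffList l f x := by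
  induction l with
  | nil => rfl
  | cons i t ih =>
      funext x
      simp only [fdiffList, List.foldr_cons] at ih ⊢
      rw [ih, fdiff, fdiff]
      ring

lemma fdiffList_zero {ι : Type*} [DecidableEq ι] (l : List ι) :
    fdiffList l (0 : (ι → ℤ) → ℂ) = 0 := by
  induction l with
  | nil => rfl
  | cons i t ih =>
      simp only [fdiffList, List.foldr_cons] at ih ⊢
      rw [ih]
      funext x
      simp [fdiff]

lemma fdiffList_append {ι : Type*} [DecidableEq ι] (l₁ l₂ : List ι) (f : (ι → ℤ) → ℂ) :
    fdiffList (l₁ ++ l₂) f = fdiffList l₁ (fdiffList l₂ f) := by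
  simp [fdiffList, List.foldr_append]

lemma vasType_long {ι : Type*} [DecidableEq ι] {k : ℕ} {f : (ι → ℤ) → ℂ}
    (hf : VasType k f) (l : List ι) (hl : k + 1 ≤ l.length) : fdiffList l f = 0 := by
  have h : l = l.take (l.length - (k+1)) ++ l.drop (l.length - (k+1)) := (List.take_append_drop _ _).symm
  rw [h, fdiffList_append, hf _ (by simp [List.length_drop]; omega), fdiffList_zero]

theorem renormalized_weight_system {n : ℕ}
    (Qhat : ℕ → (Fin n → ℤ) → ℂ) (hQ : ∀ j, VasType j (Qhat j)) (d : ℕ → ℂ) (m : ℕ)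
    (l : List (Fin n)) (hl : l.length = m) (x : Fin n → ℤ) :
    fdiffList l (fun y => ∑ j ∈ Finset.range (m + 1), d j * Qhat (m - j) y) x =
      d 0 * fdiffList l (Qhat m) x := by
  rw [fdiffList_sum]
  dsimp only
  rw [Finset.sum_eq_single 0]
  · rw [fdiffList_const_mul]
    rfl
  · intro j hj hj0
    rw [fdiffList_const_mul, vasType_long (hQ (m - j)) l (by simp at hj; omega)]
    simp
  · simp
end
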